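/- Let 𝔮 and 𝔞 be nonzero ideals of 𝒪_o and, for t > 0, set lct^{𝔮^t}(𝔞) := sup{c ≥ 0 : |𝔮|^{2t} e^{−2c log|𝔞|} is integrable near o} and Tn(t; 𝔞, 𝔮) := lct^{𝔮^t}(𝔞). If lct^𝔮(𝔞) = Tn(1; 𝔞, 𝔮) < +∞, then the function t ↦ Tn(t; 𝔞, 𝔮) is non-decreasing and concave on (0, +∞); moreover, for any 0 < s < t, lct^{𝔮^s}(𝔞) < +∞ if and only if lct^{𝔮^t}(𝔞) < +∞. -/

import Mathlib

open Filter MeasureTheory Set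
open scoped ENNReal NNReal Topology
noncomputable section

/-- ℂⁿ. -/
abbrev En (n : ℕ) := Fin n → ℂ

/-- The ring `𝒪_o` of germs at the origin of holomorphic functions on `ℂⁿ`,
realized as a subring of the ring of germs at `0` of `ℂ`-valued functions. -/
def Oring (n : ℕ) : Subring (Filter.Germ (𝓝 (0 : En n)) ℂ) where
  carrier := {g | ∃ f : En n → ℂ, AnalyticAt ℂ f 0 ∧ (f : Filter.Germ (𝓝 (0 : En n)) ℂ) = g}
  zero_mem' := ⟨0, analyticAt_const, rfl⟩
  one_mem' := ⟨1, analyticAt_const, rfl⟩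
  add_mem' := by rintro a b ⟨f, hf, rfl⟩ ⟨g, hg, rfl⟩; exact ⟨f + g, hf.add hg, rfl⟩
  mul_mem' := by rintro a b ⟨f, hf, rfl⟩ ⟨g, hg, rfl⟩; exact ⟨f * g, hf.mul hg, rfl⟩
  neg_mem' := by rintro a ⟨f, hf, rfl⟩; exact ⟨-f, hf.neg, rfl⟩

/-- `𝒪_o`. -/
abbrev O (n : ℕ) := ↥(Oring n)

lemma mem_Oring {n : ℕ} {g : Filter.Germ (𝓝 (0 : En n)) ℂ} :
    g ∈ Oring n ↔ ∃ f : En n → ℂ, AnalyticAt ℂ f 0 ∧ (f : Filter.Germ (𝓝 (0 : En n)) ℂ) = g :=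
  Iff.rfl

/-- A choice of a holomorphic representative of a germ. -/
def rep {n : ℕ} (f : O n) : En n → ℂ := Classical.choose (mem_Oring.mp f.2)

lemma rep_analyticAt {n : ℕ} (f : O n) : AnalyticAt ℂ (rep f) 0 :=
  (Classical.choose_spec (mem_Oring.mp f.2)).1

lemma rep_germ {n : ℕ} (f : O n) :
    ((rep f : En n → ℂ) : Filter.Germ (𝓝 (0 : En n)) ℂ) = f.1 :=
  (Classical.choose_spec (mem_Oring.mp f.2)).2

/-- The germ of a function holomorphic near `0`, as an element of `𝒪_o`. -/
def toO {n : ℕ} (f : En n → ℂ) (hf : AnalyticAt ℂ f 0) : O n :=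
  ⟨(f : Filter.Germ (𝓝 (0 : En n)) ℂ), ⟨f, hf, rfl⟩⟩

/-- The constant `c`, as an element of `𝒪_o`. -/
def constO (n : ℕ) (c : ℂ) : O n := toO (fun _ => c) analyticAt_const

/-- `e^x` for an extended real `x`, with values in `[0,∞]`. -/
def eexp (x : EReal) : ℝ≥0∞ :=
  if x = ⊥ then 0 else if x = ⊤ then ⊤ else ENNReal.ofReal (Real.exp x.toReal)

/-- `log x` for `x ∈ [0,∞]`, with values in `[-∞,∞]`. -/
def elog (x : ℝ≥0∞) : EReal :=
  if x = 0 then ⊥ else if x = ⊤ then ⊤ else ((Real.log x.toReal : ℝ) : EReal)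

/-- A `[0,∞]`-valued function is (Lebesgue-)integrable near the origin. -/
def IntNearZero {n : ℕ} (F : En n → ℝ≥0∞) : Prop :=
  ∃ V ∈ 𝓝 (0 : En n), ∫⁻ z in V, F z < ⊤

/-- `log ‖f‖` for a germ `f ∈ 𝒪_o`, via the chosen representative. -/
def logAbsGerm {n : ℕ} (f : O n) (z : En n) : EReal := elog ((‖rep f z‖₊ : ℝ≥0∞))

/-- `|f|²` for a germ `f ∈ 𝒪_o`. -/
def absSqGerm {n : ℕ} (f : O n) (z : En n) : ℝ≥0∞ := (‖rep f z‖₊ : ℝ≥0∞) ^ 2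

open scoped Classical in
/-- A choice of a finite family of generators of an ideal of `𝒪_o` (when one exists). -/
def idealGens {n : ℕ} (a : Ideal (O n)) : Σ k : ℕ, Fin k → O n :=
  if h : ∃ p : Σ k : ℕ, Fin k → O n, Ideal.span (Set.range p.2) = a then h.choose
  else ⟨0, fun _ => 0⟩

/-- `|𝔞|² = Σ_j |g_j|²` for an ideal `𝔞` of `𝒪_o` with generators `g_j`. -/
def absSqIdeal {n : ℕ} (a : Ideal (O n)) (z : En n) : ℝ≥0∞ :=
  ∑ j : Fin (idealGens a).1, (‖rep ((idealGens a).2 j) z‖₊ : ℝ≥0∞) ^ 2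

/-- `log |𝔞| = ½ log Σ_j |g_j|²` for an ideal `𝔞` of `𝒪_o`. -/
def logAbsIdeal {n : ℕ} (a : Ideal (O n)) (z : En n) : EReal :=
  elog ((absSqIdeal a z) ^ ((1 : ℝ) / 2))

/-- Sub-mean value inequality on circles in complex lines (tested against continuous
majorants of the circle restriction). -/
def SubMeanOnLines {n : ℕ} (φ : En n → EReal) (U : Set (En n)) : Prop :=
  ∀ z ∈ U, ∀ w : En n, ∀ r : ℝ, 0 < r →
    (∀ c : ℂ, ‖c‖ ≤ r → z + c • w ∈ U) →
    ∀ g : ℝ → ℝ, Continuous g →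
      (∀ t : ℝ, φ (z + ((r : ℂ) * Complex.exp (t * Complex.I)) • w) ≤ (g t : EReal)) →
      φ z ≤ (((1 / (2 * Real.pi)) * ∫ t in (0:ℝ)..(2 * Real.pi), g t : ℝ) : EReal)

/-- Plurisubharmonicity on a set `U ⊆ ℂⁿ`: upper semicontinuous, `< +∞`, not identically
`-∞`, and satisfying the sub-mean value inequality on circles in complex lines. -/
def PshOn {n : ℕ} (φ : En n → EReal) (U : Set (En n)) : Prop :=
  UpperSemicontinuousOn φ U ∧ (∀ z ∈ U, φ z ≠ ⊤) ∧ (¬ ∀ z ∈ U, φ z = ⊥) ∧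
    SubMeanOnLines φ U

/-- Plurisubharmonic near the origin. -/
def PshNearZero {n : ℕ} (φ : En n → EReal) : Prop := ∃ U ∈ 𝓝 (0 : En n), PshOn φ U

/-- A valuation on `𝒪_o`: a non-constant map `ν : 𝒪_o∖{0} → [0,∞)` (with `ν 0 = ∞`)
satisfying `ν(fg) = ν f + ν g`, `ν(f+g) ≥ min (ν f) (ν g)`, and `ν c = 0` for
nonzero constants `c`. -/
structure GermValuation (n : ℕ) where
  v : O n → ℝ≥0∞
  v_zero : v 0 = ⊤
  v_ne_top : ∀ f : O n, f ≠ 0 → v f ≠ ⊤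
  v_mul : ∀ f g : O n, v (f * g) = v f + v g
  v_add : ∀ f g : O n, min (v f) (v g) ≤ v (f + g)
  v_const : ∀ c : ℂ, c ≠ 0 → v (constO n c) = 0
  v_nonconst : ∃ f : O n, f ≠ 0 ∧ v f ≠ 0

/-- `ν(𝔠) = inf {ν f : f ∈ 𝔠}` for an ideal `𝔠` of `𝒪_o`. -/
def idealVal {n : ℕ} (ν : GermValuation n) (I : Ideal (O n)) : ℝ≥0∞ :=
  ⨅ f ∈ (I : Set (O n)), ν.v f

/-- The graded sequence of ideals `a^ν_m = {f : ν f ≥ m}` attached to a valuation `ν`. -/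
def aSeq {n : ℕ} (ν : GermValuation n) (m : ℕ+) : Ideal (O n) where
  carrier := {f : O n | ((m : ℕ) : ℝ≥0∞) ≤ ν.v f}
  zero_mem' := by simp [ν.v_zero]
  add_mem' := by
    intro f g hf hg
    exact le_trans (le_min hf hg) (ν.v_add f g)
  smul_mem' := by
    intro c f hf
    have : ν.v (c * f) = ν.v c + ν.v f := ν.v_mul c f
    have hf' : ((m : ℕ) : ℝ≥0∞) ≤ ν.v f := hf
    calc ((m : ℕ) : ℝ≥0∞) ≤ ν.v f := hf'
    _ ≤ ν.v c + ν.v f := le_add_self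
    _ = ν.v (c * f) := (ν.v_mul c f).symm

/-- A graded sequence of ideals: `a_p · a_q ⊆ a_{p+q}`. -/
def GradedSeq {n : ℕ} (a : ℕ+ → Ideal (O n)) : Prop :=
  ∀ p q : ℕ+, a p * a q ≤ a (p + q)

/-- A subadditive sequence of ideals: nonzero ideals with `b_{s+t} ⊆ b_s · b_t`. -/
def SubaddSeq {n : ℕ} (b : ℝ → Ideal (O n)) : Prop :=
  (∀ t : ℝ, 0 < t → b t ≠ ⊥) ∧
    ∀ s t : ℝ, 0 < s → 0 < t → b (s + t) ≤ b s * b t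

/-- The jumping number `c_o^𝔮(ψ) = sup {c ≥ 0 : |𝔮|² e^{-2cψ} integrable near o}`. -/
def jumpIdeal {n : ℕ} (q : Ideal (O n)) (ψ : En n → EReal) : ℝ≥0∞ :=
  sSup {c : ℝ≥0∞ | ∃ r : ℝ, 0 ≤ r ∧ c = ENNReal.ofReal r ∧
    IntNearZero (fun z => absSqIdeal q z * eexp ((((-2) * r : ℝ) : EReal) * ψ z))}

/-- The jumping number `c_o^f(ψ) = sup {c ≥ 0 : |f|² e^{-2cψ} integrable near o}`. -/
def jumpGerm {n : ℕ} (f : O n) (ψ : En n → EReal) : ℝ≥0∞ :=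
  sSup {c : ℝ≥0∞ | ∃ r : ℝ, 0 ≤ r ∧ c = ENNReal.ofReal r ∧
    IntNearZero (fun z => absSqGerm f z * eexp ((((-2) * r : ℝ) : EReal) * ψ z))}

/-- `lct^𝔮(𝔞) = c_o^𝔮(log|𝔞|)`. -/
def lctIdeal {n : ℕ} (q a : Ideal (O n)) : ℝ≥0∞ := jumpIdeal q (logAbsIdeal a)

/-- `lct^𝔮(a_•) = sup_m m · lct^𝔮(a_m)`. -/
def lctGrade {n : ℕ} (q : Ideal (O n)) (a : ℕ+ → Ideal (O n)) : ℝ≥0∞ :=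
  ⨆ m : ℕ+, ((m : ℕ) : ℝ≥0∞) * lctIdeal q (a m)

/-- `ν(a_•) = inf_m ν(a_m)/m`. -/
def gradVal {n : ℕ} (ν : GermValuation n) (a : ℕ+ → Ideal (O n)) : ℝ≥0∞ :=
  ⨅ m : ℕ+, idealVal ν (a m) / ((m : ℕ) : ℝ≥0∞)

/-- `ν(b_•) = sup_{t>0} ν(b_t)/t` for a subadditive sequence. -/
def subVal {n : ℕ} (ν : GermValuation n) (b : ℝ → Ideal (O n)) : ℝ≥0∞ :=
  ⨆ t : {t : ℝ // 0 < t}, idealVal ν (b t.1) / ENNReal.ofReal t.1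

/-- `lct^𝔮(b_•) = inf_{t>0} t · lct^𝔮(b_t)` for a subadditive sequence. -/
def lctSub {n : ℕ} (q : Ideal (O n)) (b : ℝ → Ideal (O n)) : ℝ≥0∞ :=
  ⨅ t : {t : ℝ // 0 < t}, ENNReal.ofReal t.1 * lctIdeal q (b t.1)

/-- `𝒜(ν)`: the supremum of `ν(a_•)·lct^𝔮(a_•) − ν(𝔮)` over all nonzero ideals `𝔮` and
graded sequences `a_•` with `lct^𝔮(a_•) < ∞`. -/
def scriptA {n : ℕ} (ν : GermValuation n) : ℝ≥0∞ :=
  sSup {x : ℝ≥0∞ | ∃ (q : Ideal (O n)) (a : ℕ+ → Ideal (O n)), q ≠ ⊥ ∧ GradedSeq a ∧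
    lctGrade q a < ⊤ ∧ x = gradVal ν a * lctGrade q a - idealVal ν q}

/-- The relative type `σ(u,Φ) = sup {c ≥ 0 : u ≤ cΦ + O(1) near o}`. -/
def relType {n : ℕ} (u Φ : En n → EReal) : ℝ≥0∞ :=
  sSup {c : ℝ≥0∞ | ∃ r : ℝ, 0 ≤ r ∧ c = ENNReal.ofReal r ∧
    ∃ C : ℝ, ∀ᶠ z in 𝓝 (0 : En n), u z ≤ (r : EReal) * Φ z + (C : EReal)}

/-- A local Zhou weight related to `|𝔮₀|²` near the origin. -/
def LocalZhouWeight {n : ℕ} (q0 : Ideal (O n)) (Φ : En n → EReal) : Prop :=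
  PshNearZero Φ ∧
  (∃ N0 : ℕ, IntNearZero (fun z =>
      absSqIdeal q0 z * (‖z‖₊ : ℝ≥0∞) ^ (2 * N0) * eexp ((((-2 : ℝ)) : EReal) * Φ z))) ∧
  (¬ IntNearZero (fun z => absSqIdeal q0 z * eexp ((((-2 : ℝ)) : EReal) * Φ z))) ∧
  (∀ φ' : En n → EReal, PshNearZero φ' →
    (∃ C : ℝ, ∀ᶠ z in 𝓝 (0 : En n), Φ z ≤ φ' z + (C : EReal)) →
    (¬ IntNearZero (fun z => absSqIdeal q0 z * eexp ((((-2 : ℝ)) : EReal) * φ' z))) →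
    ∃ C : ℝ, ∀ᶠ z in 𝓝 (0 : En n), φ' z ≤ Φ z + (C : EReal) ∧ Φ z ≤ φ' z + (C : EReal))

/-- A Zhou valuation related to `|𝔮₀|²`: a valuation given by the relative type to some
local Zhou weight related to `|𝔮₀|²`. -/
def IsZhouValuation {n : ℕ} (q0 : Ideal (O n)) (ν : GermValuation n) : Prop :=
  ∃ Φ : En n → EReal, LocalZhouWeight q0 Φ ∧
    ∀ f : O n, f ≠ 0 → ν.v f = relType (logAbsGerm f) Φ

/-- A Zhou valuation (related to some nonzero ideal). -/
def IsZhou {n : ℕ} (ν : GermValuation n) : Prop :=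
  ∃ q0 : Ideal (O n), q0 ≠ ⊥ ∧ IsZhouValuation q0 ν

lemma rep_add_eventuallyEq {n : ℕ} (f g : O n) :
    rep (f + g) =ᶠ[𝓝 (0 : En n)] fun z => rep f z + rep g z := by
  have h : ((rep (f + g) : En n → ℂ) : Filter.Germ (𝓝 (0 : En n)) ℂ)
      = ((fun z => rep f z + rep g z : En n → ℂ) : Filter.Germ (𝓝 (0 : En n)) ℂ) := by
    rw [rep_germ]
    have h1 : ((f + g : O n) : Filter.Germ (𝓝 (0 : En n)) ℂ) = (f : _) + (g : _) := rfl
    rw [h1, ← rep_germ f, ← rep_germ g]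
    rfl
  exact Filter.Germ.coe_eq.mp h

lemma rep_mul_eventuallyEq {n : ℕ} (f g : O n) :
    rep (f * g) =ᶠ[𝓝 (0 : En n)] fun z => rep f z * rep g z := by
  have h : ((rep (f * g) : En n → ℂ) : Filter.Germ (𝓝 (0 : En n)) ℂ)
      = ((fun z => rep f z * rep g z : En n → ℂ) : Filter.Germ (𝓝 (0 : En n)) ℂ) := by
    rw [rep_germ]
    have h1 : ((f * g : O n) : Filter.Germ (𝓝 (0 : En n)) ℂ) = (f : _) * (g : _) := rfl
    rw [h1, ← rep_germ f, ← rep_germ g]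
    rfl
  exact Filter.Germ.coe_eq.mp h

lemma rep_zero_eventuallyEq {n : ℕ} :
    rep (0 : O n) =ᶠ[𝓝 (0 : En n)] fun _ => (0 : ℂ) := by
  have h : ((rep (0 : O n) : En n → ℂ) : Filter.Germ (𝓝 (0 : En n)) ℂ)
      = ((fun _ => (0:ℂ) : En n → ℂ) : Filter.Germ (𝓝 (0 : En n)) ℂ) := by
    rw [rep_germ]; rfl
  exact Filter.Germ.coe_eq.mp h

/-- The maximal ideal of `𝒪_o`: germs vanishing at the origin. -/
def mIdeal (n : ℕ) : Ideal (O n) where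
  carrier := {f : O n | rep f 0 = 0}
  zero_mem' := by
    have := (rep_zero_eventuallyEq (n := n)).eq_of_nhds
    simpa using this
  add_mem' := by
    intro f g hf hg
    have h := (rep_add_eventuallyEq f g).eq_of_nhds
    simp only [Set.mem_setOf_eq] at hf hg ⊢
    rw [h, hf, hg, add_zero]
  smul_mem' := by
    intro c f hf
    have h := (rep_mul_eventuallyEq c f).eq_of_nhds
    simp only [Set.mem_setOf_eq] at hf ⊢
    show rep (c * f) 0 = 0
    rw [h, hf, mul_zero]

/-- A centered valuation: `ν(𝔪) > 0` for the maximal ideal `𝔪` of `𝒪_o`. -/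
def Centered {n : ℕ} (ν : GermValuation n) : Prop := 0 < idealVal ν (mIdeal n)

lemma exists_contOn_rep {n : ℕ} (f : O n) :
    ∃ U : Set (En n), IsOpen U ∧ (0 : En n) ∈ U ∧ ContinuousOn (rep f) U := by
  have h := (rep_analyticAt f).eventually_analyticAt
  obtain ⟨U, hUS, hUopen, h0⟩ := mem_nhds_iff.mp h
  exact ⟨U, hUopen, h0, fun z hz => ((hUS hz).continuousAt).continuousWithinAt⟩

lemma sq_add_le_four {x y : ℝ≥0∞} (h : y ≤ x) : (x + y) ^ 2 ≤ 4 * x ^ 2 := by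
  have h1 : x + y ≤ 2 * x := by rw [two_mul]; exact add_le_add le_rfl h
  calc (x + y) ^ 2 ≤ (2 * x) ^ 2 := pow_le_pow_left₀ zero_le h1 2
  _ = 4 * x ^ 2 := by ring

lemma lint_part_le {n : ℕ} {S V : Set (En n)} (hSV : S ⊆ V) (G H : En n → ℝ≥0∞)
    (hae : ∀ᵐ z ∂((volume : Measure (En n)).restrict S), G z ≤ 4 * H z) :
    ∫⁻ z in S, G z ≤ 4 * ∫⁻ z in V, H z := by
  calc ∫⁻ z in S, G z ≤ ∫⁻ z in S, 4 * H z := lintegral_mono_ae hae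
    _ = 4 * ∫⁻ z in S, H z := lintegral_const_mul' _ _ (by norm_num)
    _ ≤ 4 * ∫⁻ z in V, H z := by gcongr

lemma contOn_ennnorm {n : ℕ} {f : En n → ℂ} {U : Set (En n)} (hf : ContinuousOn f U) :
    ContinuousOn (fun z => (‖f z‖₊ : ℝ≥0∞)) U :=
  ENNReal.continuous_coe.comp_continuousOn hf.nnnorm

/-- The multiplier ideal `𝓘(ψ)_o = {f ∈ 𝒪_o : |f|² e^{-2ψ} integrable near o}`. -/
def multIdeal {n : ℕ} (ψ : En n → EReal) : Ideal (O n) where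
  carrier := {f : O n |
    IntNearZero (fun z => absSqGerm f z * eexp ((((-2 : ℝ)) : EReal) * ψ z))}
  zero_mem' := by
    have hmem : {z : En n | rep (0 : O n) z = 0} ∈ 𝓝 (0 : En n) := rep_zero_eventuallyEq
    obtain ⟨U, hUS, hUopen, h0⟩ := mem_nhds_iff.mp hmem
    refine ⟨U, hUopen.mem_nhds h0, ?_⟩
    have hz : ∫⁻ z in U, (absSqGerm (0 : O n) z * eexp ((((-2 : ℝ)) : EReal) * ψ z))
        = ∫⁻ _ in U, (0 : ℝ≥0∞) := by
      refine setLIntegral_congr_fun hUopen.measurableSet (fun z hzU => ?_)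
      have : rep (0 : O n) z = 0 := hUS hzU
      simp [absSqGerm, this]
    rw [hz]
    simp
  add_mem' := by
    rintro f g ⟨Vf, hVf, hIf⟩ ⟨Vg, hVg, hIg⟩
    set W : En n → ℝ≥0∞ := fun z => eexp ((((-2 : ℝ)) : EReal) * ψ z) with hW
    obtain ⟨Uf, hUfo, hUf0, hUfc⟩ := exists_contOn_rep f
    obtain ⟨Ug, hUgo, hUg0, hUgc⟩ := exists_contOn_rep g
    have hSeq : {z : En n | rep (f + g) z = rep f z + rep g z} ∈ 𝓝 (0 : En n) :=
      rep_add_eventuallyEq f g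
    obtain ⟨U, hUS, hUopen, h0U⟩ := mem_nhds_iff.mp
      (Filter.inter_mem (Filter.inter_mem (Filter.inter_mem hVf hVg) hSeq)
        (Filter.inter_mem (hUfo.mem_nhds hUf0) (hUgo.mem_nhds hUg0)))
    have hUVf : U ⊆ Vf := fun z hz => (hUS hz).1.1.1
    have hUVg : U ⊆ Vg := fun z hz => (hUS hz).1.1.2
    have hUeq : ∀ z ∈ U, rep (f + g) z = rep f z + rep g z := fun z hz => (hUS hz).1.2
    have hGf : AEMeasurable (fun z => (‖rep f z‖₊ : ℝ≥0∞)) (volume.restrict U) :=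
      (contOn_ennnorm (hUfc.mono (fun z hz => (hUS hz).2.1))).aemeasurable
        hUopen.measurableSet
    have hGg : AEMeasurable (fun z => (‖rep g z‖₊ : ℝ≥0∞)) (volume.restrict U) :=
      (contOn_ennnorm (hUgc.mono (fun z hz => (hUS hz).2.2))).aemeasurable
        hUopen.measurableSet
    set A : Set (En n) := {z | hGg.mk _ z ≤ hGf.mk _ z} with hA
    have hAm : MeasurableSet A := measurableSet_le hGg.measurable_mk hGf.measurable_mk
    refine ⟨U, hUopen.mem_nhds h0U, ?_⟩
    have hsplit : ∫⁻ z in U, (absSqGerm (f + g) z * W z)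
        ≤ (∫⁻ z in U ∩ A, (absSqGerm (f + g) z * W z))
          + ∫⁻ z in U ∩ Aᶜ, (absSqGerm (f + g) z * W z) := by
      have hU : U = (U ∩ A) ∪ (U ∩ Aᶜ) := by
        rw [← Set.inter_union_distrib_left, Set.union_compl_self, Set.inter_univ]
      calc ∫⁻ z in U, (absSqGerm (f + g) z * W z)
          = ∫⁻ z in (U ∩ A) ∪ (U ∩ Aᶜ), (absSqGerm (f + g) z * W z) := by rw [← hU]
        _ ≤ _ := lintegral_union_le _ _ _
    have haef : ∀ᵐ z ∂((volume : Measure (En n)).restrict (U ∩ A)),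
        absSqGerm (f + g) z * W z ≤ 4 * (absSqGerm f z * W z) := by
      have hmem := ae_restrict_mem (μ := (volume : Measure (En n))) ((hUopen.measurableSet).inter hAm)
      have hmkf : (fun z => (‖rep f z‖₊ : ℝ≥0∞)) =ᵐ[(volume : Measure (En n)).restrict (U ∩ A)]
          hGf.mk _ :=
        (hGf.ae_eq_mk).filter_mono (ae_mono (Measure.restrict_mono Set.inter_subset_left le_rfl))
      have hmkg : (fun z => (‖rep g z‖₊ : ℝ≥0∞)) =ᵐ[(volume : Measure (En n)).restrict (U ∩ A)]
          hGg.mk _ :=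
        (hGg.ae_eq_mk).filter_mono (ae_mono (Measure.restrict_mono Set.inter_subset_left le_rfl))
      filter_upwards [hmem, hmkf, hmkg] with z hz hf' hg'
      have hle : (‖rep g z‖₊ : ℝ≥0∞) ≤ (‖rep f z‖₊ : ℝ≥0∞) := by
        rw [hf', hg']; exact hz.2
      have hnormle : absSqGerm (f + g) z ≤ 4 * absSqGerm f z := by
        have h2 : (‖rep (f + g) z‖₊ : ℝ≥0∞)
            ≤ (‖rep f z‖₊ : ℝ≥0∞) + (‖rep g z‖₊ : ℝ≥0∞) := by
          rw [hUeq z hz.1]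
          exact_mod_cast nnnorm_add_le _ _
        calc absSqGerm (f + g) z
            ≤ ((‖rep f z‖₊ : ℝ≥0∞) + (‖rep g z‖₊ : ℝ≥0∞)) ^ 2 := pow_le_pow_left₀ zero_le h2 2
          _ ≤ 4 * (‖rep f z‖₊ : ℝ≥0∞) ^ 2 := sq_add_le_four hle
          _ = 4 * absSqGerm f z := rfl
      calc absSqGerm (f + g) z * W z ≤ (4 * absSqGerm f z) * W z :=
            mul_le_mul_of_nonneg_right hnormle zero_le
        _ = 4 * (absSqGerm f z * W z) := by ring
    have haeg : ∀ᵐ z ∂((volume : Measure (En n)).restrict (U ∩ Aᶜ)),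
        absSqGerm (f + g) z * W z ≤ 4 * (absSqGerm g z * W z) := by
      have hmem := ae_restrict_mem (μ := (volume : Measure (En n))) ((hUopen.measurableSet).inter hAm.compl)
      have hmkf : (fun z => (‖rep f z‖₊ : ℝ≥0∞)) =ᵐ[(volume : Measure (En n)).restrict (U ∩ Aᶜ)]
          hGf.mk _ :=
        (hGf.ae_eq_mk).filter_mono (ae_mono (Measure.restrict_mono Set.inter_subset_left le_rfl))
      have hmkg : (fun z => (‖rep g z‖₊ : ℝ≥0∞)) =ᵐ[(volume : Measure (En n)).restrict (U ∩ Aᶜ)]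
          hGg.mk _ :=
        (hGg.ae_eq_mk).filter_mono (ae_mono (Measure.restrict_mono Set.inter_subset_left le_rfl))
      filter_upwards [hmem, hmkf, hmkg] with z hz hf' hg'
      have hle : (‖rep f z‖₊ : ℝ≥0∞) ≤ (‖rep g z‖₊ : ℝ≥0∞) := by
        rw [hf', hg']
        exact le_of_not_ge hz.2
      have hnormle : absSqGerm (f + g) z ≤ 4 * absSqGerm g z := by
        have h2 : (‖rep (f + g) z‖₊ : ℝ≥0∞)
            ≤ (‖rep g z‖₊ : ℝ≥0∞) + (‖rep f z‖₊ : ℝ≥0∞) := by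
          rw [hUeq z hz.1, add_comm (rep f z)]
          exact_mod_cast nnnorm_add_le _ _
        calc absSqGerm (f + g) z
            ≤ ((‖rep g z‖₊ : ℝ≥0∞) + (‖rep f z‖₊ : ℝ≥0∞)) ^ 2 := pow_le_pow_left₀ zero_le h2 2
          _ ≤ 4 * (‖rep g z‖₊ : ℝ≥0∞) ^ 2 := sq_add_le_four hle
          _ = 4 * absSqGerm g z := rfl
      calc absSqGerm (f + g) z * W z ≤ (4 * absSqGerm g z) * W z :=
            mul_le_mul_of_nonneg_right hnormle zero_le
        _ = 4 * (absSqGerm g z * W z) := by ring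
    have h1 := lint_part_le (S := U ∩ A) (V := Vf)
      (fun z hz => hUVf hz.1) _ _ haef
    have h2 := lint_part_le (S := U ∩ Aᶜ) (V := Vg)
      (fun z hz => hUVg hz.1) _ _ haeg
    calc ∫⁻ z in U, (absSqGerm (f + g) z * W z)
        ≤ (∫⁻ z in U ∩ A, (absSqGerm (f + g) z * W z))
          + ∫⁻ z in U ∩ Aᶜ, (absSqGerm (f + g) z * W z) := hsplit
      _ ≤ 4 * (∫⁻ z in Vf, (absSqGerm f z * W z))
          + 4 * ∫⁻ z in Vg, (absSqGerm g z * W z) := add_le_add h1 h2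
      _ < ⊤ := by
          exact ENNReal.add_lt_top.mpr
            ⟨ENNReal.mul_lt_top (by norm_num) hIf, ENNReal.mul_lt_top (by norm_num) hIg⟩
  smul_mem' := by
    rintro c f ⟨Vf, hVf, hIf⟩
    set W : En n → ℝ≥0∞ := fun z => eexp ((((-2 : ℝ)) : EReal) * ψ z) with hW
    have hSeq : {z : En n | rep (c * f) z = rep c z * rep f z} ∈ 𝓝 (0 : En n) :=
      rep_mul_eventuallyEq c f
    have hcont : ContinuousAt (rep c) 0 := (rep_analyticAt c).continuousAt
    set M : ℝ≥0 := ‖rep c 0‖₊ + 1 with hM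
    have hbd : {z : En n | ‖rep c z‖₊ ≤ M} ∈ 𝓝 (0 : En n) := by
      have : ∀ᶠ z in 𝓝 (0 : En n), dist (rep c z) (rep c 0) < 1 :=
        hcont.eventually (Metric.ball_mem_nhds _ one_pos)
      filter_upwards [this] with z hz
      have : ‖rep c z‖ ≤ ‖rep c 0‖ + 1 := by
        have h1 : ‖rep c z - rep c 0‖ < 1 := by
          rwa [dist_eq_norm] at hz
        calc ‖rep c z‖ = ‖rep c 0 + (rep c z - rep c 0)‖ := by ring_nf
          _ ≤ ‖rep c 0‖ + ‖rep c z - rep c 0‖ := norm_add_le _ _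
          _ ≤ ‖rep c 0‖ + 1 := by linarith
      simpa [hM, ← NNReal.coe_le_coe] using this
    obtain ⟨U, hUS, hUopen, h0U⟩ := mem_nhds_iff.mp
      (Filter.inter_mem (Filter.inter_mem hVf hSeq) hbd)
    refine ⟨U, hUopen.mem_nhds h0U, ?_⟩
    have hae : ∀ᵐ z ∂((volume : Measure (En n)).restrict U),
        absSqGerm (c • f) z * W z ≤ ((M : ℝ≥0∞) ^ 2) * (absSqGerm f z * W z) := by
      refine (ae_restrict_mem (μ := (volume : Measure (En n))) hUopen.measurableSet).mono fun z hz => ?_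
      have heq : rep (c * f) z = rep c z * rep f z := (hUS hz).1.2
      have hble : (‖rep c z‖₊ : ℝ≥0∞) ≤ (M : ℝ≥0∞) := by
        exact_mod_cast (hUS hz).2
      have : absSqGerm (c • f) z ≤ (M : ℝ≥0∞) ^ 2 * absSqGerm f z := by
        show (‖rep (c * f) z‖₊ : ℝ≥0∞) ^ 2 ≤ _
        rw [heq]
        have : (‖rep c z * rep f z‖₊ : ℝ≥0∞) = (‖rep c z‖₊ : ℝ≥0∞) * (‖rep f z‖₊ : ℝ≥0∞) := by
          rw [nnnorm_mul]; exact_mod_cast rfl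
        rw [this, mul_pow]
        exact mul_le_mul_of_nonneg_right (pow_le_pow_left₀ zero_le hble 2) zero_le
      calc absSqGerm (c • f) z * W z ≤ ((M : ℝ≥0∞) ^ 2 * absSqGerm f z) * W z :=
            mul_le_mul_of_nonneg_right this zero_le
        _ = (M : ℝ≥0∞) ^ 2 * (absSqGerm f z * W z) := by ring
    calc ∫⁻ z in U, (absSqGerm (c • f) z * W z)
        ≤ ∫⁻ z in U, ((M : ℝ≥0∞) ^ 2) * (absSqGerm f z * W z) := lintegral_mono_ae hae
      _ = ((M : ℝ≥0∞) ^ 2) * ∫⁻ z in U, (absSqGerm f z * W z) :=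
          lintegral_const_mul' _ _ (by simp)
      _ ≤ ((M : ℝ≥0∞) ^ 2) * ∫⁻ z in Vf, (absSqGerm f z * W z) := by
          gcongr
          exact fun z hz => (hUS hz).1.1
      _ < ⊤ := ENNReal.mul_lt_top (by simp [ENNReal.pow_lt_top, ENNReal.coe_lt_top]) hIf

/-- The sequence of multiplier ideals `b^φ_t = 𝓘(tφ)_o`. -/
def bphi {n : ℕ} (φ : En n → EReal) (t : ℝ) : Ideal (O n) :=
  multIdeal (fun z => (t : EReal) * φ z)

/-- The Tian function `Tn(t) = sup {c ≥ 0 : |𝔮₀|^{2t} e^{-2cΦ} integrable near o}`. -/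
def TnFun {n : ℕ} (q0 : Ideal (O n)) (Φ : En n → EReal) (t : ℝ) : ℝ≥0∞ :=
  sSup {c : ℝ≥0∞ | ∃ r : ℝ, 0 ≤ r ∧ c = ENNReal.ofReal r ∧
    IntNearZero (fun z => (absSqIdeal q0 z) ^ t * eexp ((((-2) * r : ℝ) : EReal) * Φ z))}

/-- `lct^{𝔮^t}(𝔞) = sup {c ≥ 0 : |𝔮|^{2t} e^{-2c log|𝔞|} integrable near o}`. -/
def lctQt {n : ℕ} (q a : Ideal (O n)) (t : ℝ) : ℝ≥0∞ :=
  sSup {c : ℝ≥0∞ | ∃ r : ℝ, 0 ≤ r ∧ c = ENNReal.ofReal r ∧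
    IntNearZero (fun z => (absSqIdeal q z) ^ t * eexp ((((-2) * r : ℝ) : EReal) * logAbsIdeal a z))}

/-- `lct^{𝔮^t}(a_•) = sup_m m · lct^{𝔮^t}(a_m)` for a graded sequence `a_•`. -/
def lctQtGrade {n : ℕ} (q : Ideal (O n)) (a : ℕ+ → Ideal (O n)) (t : ℝ) : ℝ≥0∞ :=
  ⨆ m : ℕ+, ((m : ℕ) : ℝ≥0∞) * lctQt q (a m) t

/-- The Euclidean unit ball in `ℂⁿ`. -/
def eball (n : ℕ) : Set (En n) := {z | ∑ i, Complex.normSq (z i) < 1}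

lemma zero_mem_eball (n : ℕ) : (0 : En n) ∈ eball n := by simp [eball]

/-!
Write `Q = |𝔮|²` and `A = |𝔞|²`, so that `e^{-2c log|𝔞|} = A^{-c}` and `lct^{𝔮^t}(𝔞)` is the
supremum of the `c ≥ 0` with `Q^t A^{-c}` integrable near `o`. As `Q` is bounded near `o`,
increasing `t` only improves integrability, whence monotonicity. Concavity follows from the
pointwise identity `Q^{λs+(1-λ)t} A^{-(λc₁+(1-λ)c₂)} = (Q^s A^{-c₁})^λ (Q^t A^{-c₂})^{1-λ}`,
whose right side is at most `Q^s A^{-c₁} + Q^t A^{-c₂}`.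
For `0 < s ≤ t`, the bound `(Q^t A^{-c})^{s/t} ≤ 1 + Q^t A^{-c}` gives
`(s/t) · lct^{𝔮^t}(𝔞) ≤ lct^{𝔮^s}(𝔞)`, so finiteness at `s` and at `t` are equivalent.
-/

namespace ENNReal

theorem rpow_add_of_nonpos (x : ℝ≥0∞) {y z : ℝ} (hy : y ≤ 0) (hz : z ≤ 0) :
    x ^ (y + z) = x ^ y * x ^ z := by
  simpa [inv_rpow, ← rpow_neg, add_comm] using
    rpow_add_of_nonneg (x := x⁻¹) (-y) (-z) (neg_nonneg.2 hy) (neg_nonneg.2 hz)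

theorem rpow_mul_rpow_one_sub_le_add (x y : ℝ≥0∞) {l : ℝ} (h0 : 0 ≤ l) (h1 : l ≤ 1) :
    x ^ l * y ^ (1 - l) ≤ x + y :=
  calc x ^ l * y ^ (1 - l) ≤ max x y ^ l * max x y ^ (1 - l) := by
        gcongr
        exacts [le_max_left x y, le_max_right x y]
    _ = max x y := by
        rw [← rpow_add_of_nonneg _ _ h0 (sub_nonneg.2 h1), add_sub_cancel, rpow_one]
    _ ≤ x + y := max_le le_self_add le_add_self

theorem rpow_le_one_add (x : ℝ≥0∞) {l : ℝ} (h0 : 0 ≤ l) (h1 : l ≤ 1) : x ^ l ≤ 1 + x := by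
  simpa using rpow_mul_rpow_one_sub_le_add 1 x (sub_nonneg.2 h1) (sub_le_self 1 h0)

theorem rpow_mul_rpow_neg_le_add (x y : ℝ≥0∞) {s t r₁ r₂ l : ℝ} (hs : 0 ≤ s) (ht : 0 ≤ t)
    (hr₁ : 0 ≤ r₁) (hr₂ : 0 ≤ r₂) (hl₀ : 0 ≤ l) (hl₁ : l ≤ 1) :
    x ^ (l * s + (1 - l) * t) * y ^ (-(l * r₁ + (1 - l) * r₂))
      ≤ x ^ s * y ^ (-r₁) + x ^ t * y ^ (-r₂) := by
  have hl : 0 ≤ 1 - l := sub_nonneg.2 hl₁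
  calc x ^ (l * s + (1 - l) * t) * y ^ (-(l * r₁ + (1 - l) * r₂))
      = (x ^ s * y ^ (-r₁)) ^ l * (x ^ t * y ^ (-r₂)) ^ (1 - l) := by
        rw [mul_rpow_of_nonneg _ _ hl₀, mul_rpow_of_nonneg _ _ hl,
          ← rpow_mul, ← rpow_mul, ← rpow_mul, ← rpow_mul,
          neg_add, rpow_add_of_nonneg _ _ (by positivity) (by positivity),
          rpow_add_of_nonpos _ (by nlinarith) (by nlinarith)]
        ring_nf
    _ ≤ x ^ s * y ^ (-r₁) + x ^ t * y ^ (-r₂) :=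
        rpow_mul_rpow_one_sub_le_add _ _ hl₀ hl₁

end ENNReal

theorem eexp_eq_exp : eexp = EReal.exp := by
  ext x
  induction x using EReal.rec <;> simp [eexp]

theorem elog_eq_log : elog = ENNReal.log := rfl

theorem eexp_coe_mul_elog (c : ℝ) (y : ℝ≥0∞) : eexp (c * elog y) = y ^ c := by
  rw [eexp_eq_exp, elog_eq_log, ENNReal.rpow_eq_exp_mul_log]

theorem StronglyMeasurableAtFilter.rpow_mul_rpow {α : Type*} [MeasurableSpace α] {μ : Measure α}
    {l : Filter α} {F G : α → ℝ≥0∞} (hF : StronglyMeasurableAtFilter F l μ)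
    (hG : StronglyMeasurableAtFilter G l μ) (x y : ℝ) :
    StronglyMeasurableAtFilter (fun z => F z ^ x * G z ^ y) l μ := by
  obtain ⟨U, hU, hFU⟩ := hF
  obtain ⟨V, hV, hGV⟩ := hG
  exact ⟨U ∩ V, inter_mem hU hV, (((hFU.mono_set inter_subset_left).aemeasurable.pow_const x).mul
    ((hGV.mono_set inter_subset_right).aemeasurable.pow_const y)).aestronglyMeasurable⟩

variable {n : ℕ}

theorem intNearZero_one : IntNearZero (fun _ : En n => (1 : ℝ≥0∞)) := by
  obtain ⟨s, hs, hfin⟩ := (volume : Measure (En n)).finiteAt_nhds 0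
  exact ⟨s, hs, by rwa [setLIntegral_one]⟩

namespace IntNearZero

variable {F G : En n → ℝ≥0∞}

theorem mono (hG : IntNearZero G) (h : ∀ z, F z ≤ G z) : IntNearZero F := by
  obtain ⟨V, hV, hi⟩ := hG
  exact ⟨V, hV, (lintegral_mono h).trans_lt hi⟩

theorem of_eventually_le_const_mul (hG : IntNearZero G) {C : ℝ≥0∞} (hC : C ≠ ⊤)
    (h : ∀ᶠ z in 𝓝 0, F z ≤ C * G z) : IntNearZero F := by
  obtain ⟨V, hV, hi⟩ := hG
  obtain ⟨U, hUF, hUo, hU0⟩ := mem_nhds_iff.1 h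
  refine ⟨U ∩ V, inter_mem (hUo.mem_nhds hU0) hV, ?_⟩
  have hle : ∀ᵐ z ∂volume.restrict (U ∩ V), F z ≤ C * G z :=
    (ae_restrict_of_forall_mem hUo.measurableSet hUF).filter_mono
      (ae_mono (Measure.restrict_mono inter_subset_left le_rfl))
  calc ∫⁻ z in U ∩ V, F z ≤ ∫⁻ z in U ∩ V, C * G z := lintegral_mono_ae hle
    _ = C * ∫⁻ z in U ∩ V, G z := lintegral_const_mul' _ _ hC
    _ ≤ C * ∫⁻ z in V, G z := by gcongr; exact inter_subset_right
    _ < ⊤ := ENNReal.mul_lt_top hC.lt_top hi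

theorem add (hF : IntNearZero F) (hG : IntNearZero G)
    (hFm : StronglyMeasurableAtFilter F (𝓝 0)) : IntNearZero (fun z => F z + G z) := by
  obtain ⟨U, hU, hFU⟩ := hFm
  obtain ⟨V, hV, hFV⟩ := hF
  obtain ⟨W, hW, hGW⟩ := hG
  refine ⟨U ∩ V ∩ W, inter_mem (inter_mem hU hV) hW, ?_⟩
  calc ∫⁻ z in U ∩ V ∩ W, F z + G z
      = (∫⁻ z in U ∩ V ∩ W, F z) + ∫⁻ z in U ∩ V ∩ W, G z :=
        lintegral_add_left' (hFU.mono_set fun _ hz => hz.1.1).aemeasurable _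
    _ ≤ (∫⁻ z in V, F z) + ∫⁻ z in W, G z :=
        add_le_add (lintegral_mono_set fun _ hz => hz.1.2) (lintegral_mono_set fun _ hz => hz.2)
    _ < ⊤ := ENNReal.add_lt_top.2 ⟨hFV, hGW⟩

end IntNearZero

def integrableExponents (Q A : En n → ℝ≥0∞) (t : ℝ) : Set ℝ≥0∞ :=
  {c | ∃ r : ℝ, 0 ≤ r ∧ c = ENNReal.ofReal r ∧ IntNearZero (fun z => Q z ^ t * A z ^ (-r))}

def lctWeight (Q A : En n → ℝ≥0∞) (t : ℝ) : ℝ≥0∞ := sSup (integrableExponents Q A t)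

section lctWeight

variable {Q A : En n → ℝ≥0∞} {M : ℝ≥0∞} {s t : ℝ}

theorem ofReal_le_lctWeight {r : ℝ} (hr : 0 ≤ r)
    (h : IntNearZero fun z => Q z ^ t * A z ^ (-r)) : ENNReal.ofReal r ≤ lctWeight Q A t :=
  le_sSup ⟨r, hr, rfl, h⟩

theorem zero_mem_integrableExponents (hM : M ≠ ⊤) (hQ : ∀ᶠ z in 𝓝 0, Q z ≤ M) (ht : 0 ≤ t) :
    0 ∈ integrableExponents Q A t := by
  refine ⟨0, le_rfl, ENNReal.ofReal_zero.symm,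
    intNearZero_one.of_eventually_le_const_mul (ENNReal.rpow_ne_top_of_nonneg ht hM) ?_⟩
  filter_upwards [hQ] with z hz
  simpa using ENNReal.rpow_le_rpow hz ht

theorem lctWeight_mono (hM : M ≠ ⊤) (hQ : ∀ᶠ z in 𝓝 0, Q z ≤ M) (hs : 0 ≤ s) (hst : s ≤ t) :
    lctWeight Q A s ≤ lctWeight Q A t := by
  refine sSup_le_sSup ?_
  rintro _ ⟨r, hr, rfl, h⟩
  have hts : 0 ≤ t - s := sub_nonneg.2 hst
  refine ⟨r, hr, rfl, h.of_eventually_le_const_mul (ENNReal.rpow_ne_top_of_nonneg hts hM) ?_⟩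
  filter_upwards [hQ] with z hz
  calc Q z ^ t * A z ^ (-r) = Q z ^ (t - s) * (Q z ^ s * A z ^ (-r)) := by
        rw [← mul_assoc, ← ENNReal.rpow_add_of_nonneg _ _ hts hs, sub_add_cancel]
    _ ≤ M ^ (t - s) * (Q z ^ s * A z ^ (-r)) := by gcongr

theorem ofReal_div_mul_lctWeight_le (hs : 0 < s) (hst : s ≤ t) :
    ENNReal.ofReal (s / t) * lctWeight Q A t ≤ lctWeight Q A s := by
  have ht : 0 < t := hs.trans_le hst
  rw [lctWeight, ENNReal.mul_sSup]
  refine iSup₂_le ?_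
  rintro _ ⟨r, hr, rfl, h⟩
  rw [← ENNReal.ofReal_mul (by positivity)]
  refine ofReal_le_lctWeight (by positivity) ((intNearZero_one.add h
    (continuous_const.stronglyMeasurableAtFilter _ _)).mono fun z => ?_)
  calc Q z ^ s * A z ^ (-(s / t * r)) = (Q z ^ t * A z ^ (-r)) ^ (s / t) := by
        rw [ENNReal.mul_rpow_of_nonneg _ _ (by positivity), ← ENNReal.rpow_mul,
          ← ENNReal.rpow_mul]
        congr 2 <;> field_simp
    _ ≤ 1 + Q z ^ t * A z ^ (-r) :=
        ENNReal.rpow_le_one_add _ (by positivity) (div_le_one_of_le₀ hst ht.le)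

theorem lctWeight_lt_top_iff (hM : M ≠ ⊤) (hQ : ∀ᶠ z in 𝓝 0, Q z ≤ M) (hs : 0 < s)
    (hst : s ≤ t) : lctWeight Q A s < ⊤ ↔ lctWeight Q A t < ⊤ := by
  refine ⟨fun h => ?_, (lctWeight_mono hM hQ hs.le hst).trans_lt⟩
  have hst' : ENNReal.ofReal (s / t) ≠ 0 := by
    simpa using div_pos hs (hs.trans_le hst)
  exact ENNReal.lt_top_of_mul_ne_top_right
    ((ofReal_div_mul_lctWeight_le hs hst).trans_lt h).ne hst'

theorem lctWeight_concave (hM : M ≠ ⊤) (hQ : ∀ᶠ z in 𝓝 0, Q z ≤ M)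
    (hQm : StronglyMeasurableAtFilter Q (𝓝 0)) (hAm : StronglyMeasurableAtFilter A (𝓝 0))
    (hs : 0 ≤ s) (ht : 0 ≤ t) {l : ℝ} (hl₀ : 0 ≤ l) (hl₁ : l ≤ 1) :
    ENNReal.ofReal l * lctWeight Q A s + ENNReal.ofReal (1 - l) * lctWeight Q A t
      ≤ lctWeight Q A (l * s + (1 - l) * t) := by
  have hl : 0 ≤ 1 - l := sub_nonneg.2 hl₁
  rw [lctWeight, lctWeight, ENNReal.mul_sSup, ENNReal.mul_sSup]
  refine ENNReal.biSup_add_biSup_le ⟨0, zero_mem_integrableExponents hM hQ hs⟩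
    ⟨0, zero_mem_integrableExponents hM hQ ht⟩ ?_
  rintro _ ⟨r₁, hr₁, rfl, h₁⟩ _ ⟨r₂, hr₂, rfl, h₂⟩
  rw [← ENNReal.ofReal_mul hl₀, ← ENNReal.ofReal_mul hl,
    ← ENNReal.ofReal_add (by positivity) (by positivity)]
  exact ofReal_le_lctWeight (by positivity) ((h₁.add h₂ (hQm.rpow_mul_rpow hAm _ _)).mono
    fun z => ENNReal.rpow_mul_rpow_neg_le_add _ _ hs ht hr₁ hr₂ hl₀ hl₁)

end lctWeight

theorem eexp_neg_two_mul_logAbsIdeal (a : Ideal (O n)) (r : ℝ) (z : En n) :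
    eexp ((((-2) * r : ℝ) : EReal) * logAbsIdeal a z) = absSqIdeal a z ^ (-r) := by
  rw [logAbsIdeal, eexp_coe_mul_elog, ← ENNReal.rpow_mul]
  ring_nf

theorem lctQt_eq_lctWeight (q a : Ideal (O n)) (t : ℝ) :
    lctQt q a t = lctWeight (absSqIdeal q) (absSqIdeal a) t := by
  simp only [lctQt, lctWeight, integrableExponents, eexp_neg_two_mul_logAbsIdeal]

theorem eventually_continuousAt_absSqIdeal (a : Ideal (O n)) :
    ∀ᶠ z in 𝓝 0, ContinuousAt (absSqIdeal a) z := by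
  have h : ∀ᶠ z in 𝓝 (0 : En n), ∀ j, AnalyticAt ℂ (rep ((idealGens a).2 j)) z :=
    eventually_all.2 fun j => (rep_analyticAt _).eventually_analyticAt
  filter_upwards [h] with z hz
  have := fun j => (hz j).continuousAt
  unfold absSqIdeal
  fun_prop

theorem stronglyMeasurableAtFilter_absSqIdeal (a : Ideal (O n)) :
    StronglyMeasurableAtFilter (absSqIdeal a) (𝓝 0) := by
  obtain ⟨U, hU, hUo, h0⟩ := mem_nhds_iff.1 (eventually_continuousAt_absSqIdeal a)
  exact (continuousOn_of_forall_continuousAt hU).stronglyMeasurableAtFilter hUo 0 h0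

theorem absSqIdeal_ne_top (a : Ideal (O n)) (z : En n) : absSqIdeal a z ≠ ⊤ :=
  ENNReal.sum_ne_top.2 fun _ _ => by simp

theorem exists_eventually_absSqIdeal_le (q : Ideal (O n)) :
    ∃ M ≠ ⊤, ∀ᶠ z in 𝓝 0, absSqIdeal q z ≤ M :=
  ⟨absSqIdeal q 0 + 1, ENNReal.add_ne_top.2 ⟨absSqIdeal_ne_top q 0, ENNReal.one_ne_top⟩,
    ((eventually_continuousAt_absSqIdeal q).self_of_nhds.eventually
      (gt_mem_nhds (ENNReal.lt_add_right (absSqIdeal_ne_top q 0) one_ne_zero))).mono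
      fun _ => le_of_lt⟩

theorem lctQt_monotone_concave_general
    (n : ℕ) (q a : Ideal (O n)) :
    (∀ s t : ℝ, 0 < s → 0 < t → s ≤ t → lctQt q a s ≤ lctQt q a t) ∧
    (∀ s t l : ℝ, 0 < s → 0 < t → 0 ≤ l → l ≤ 1 →
      ENNReal.ofReal l * lctQt q a s + ENNReal.ofReal (1 - l) * lctQt q a t
        ≤ lctQt q a (l * s + (1 - l) * t)) ∧
    (∀ s t : ℝ, 0 < s → s < t → (lctQt q a s < ⊤ ↔ lctQt q a t < ⊤)) := by
  obtain ⟨M, hM, hQ⟩ := exists_eventually_absSqIdeal_le q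
  simp only [lctQt_eq_lctWeight]
  exact ⟨fun s t hs _ hst => lctWeight_mono hM hQ hs.le hst,
    fun s t l hs ht hl₀ hl₁ => lctWeight_concave hM hQ (stronglyMeasurableAtFilter_absSqIdeal q)
      (stronglyMeasurableAtFilter_absSqIdeal a) hs.le ht.le hl₀ hl₁,
    fun s t hs hst => lctWeight_lt_top_iff hM hQ hs hst.le⟩

/-- For nonzero ideals `𝔮, 𝔞` of `𝒪_o` with `lct^𝔮(𝔞) < ∞`, the function
`t ↦ Tn(t;𝔞,𝔮) = lct^{𝔮^t}(𝔞)` is non-decreasing and concave on `(0,∞)`, and for any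
`0 < s < t`, `lct^{𝔮^s}(𝔞) < ∞ ↔ lct^{𝔮^t}(𝔞) < ∞`. -/
theorem lctQt_monotone_concave
    (n : ℕ) (q a : Ideal (O n)) (hq : q ≠ ⊥) (ha : a ≠ ⊥)
    (hfin : lctQt q a 1 < ⊤) :
    (∀ s t : ℝ, 0 < s → 0 < t → s ≤ t → lctQt q a s ≤ lctQt q a t) ∧
    (∀ s t l : ℝ, 0 < s → 0 < t → 0 ≤ l → l ≤ 1 →
      ENNReal.ofReal l * lctQt q a s + ENNReal.ofReal (1 - l) * lctQt q a t
        ≤ lctQt q a (l * s + (1 - l) * t)) ∧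
    (∀ s t : ℝ, 0 < s → s < t → (lctQt q a s < ⊤ ↔ lctQt q a t < ⊤)) :=
  lctQt_monotone_concave_general n q a
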